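/- arXiv:1402.5728 — 4 statements merged into one kernel-verified Lean document; each statement's English description precedes it below -/
import Mathlib

section
/- Let X ∈ ℝ^{m×n} have columns x_1,…,x_n with ‖x_j‖₂ = 1 for all j, let y ∈ ℝ^m be centered (yᵀ𝐞_m = 0), and let λ > 0, μ ∈ (0,1). Suppose w̄ ∈ ℝⁿ (together with a threshold θ̄ ∈ ℝ) minimizes the elastic net objective J_EN(w,θ) = ‖Xw − θ𝐞_m − y‖₂² + λ[μ‖w‖₂² + (1−μ)‖w‖₁]. If j,k are indices with x_jᵀx_k ≥ 0, then |w̄_j − w̄_k| ≤ (‖y‖₁ / (λμ)) · √(2(1 − x_jᵀx_k)). -/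
open Finset

/-- The ℓ₂-norm on `Fin n → ℝ`. -/
noncomputable def l2norm {n : ℕ} (x : Fin n → ℝ) : ℝ := Real.sqrt (∑ i, (x i) ^ 2)

/-- The ℓ₁-norm on `Fin n → ℝ`. -/
def l1norm {n : ℕ} (x : Fin n → ℝ) : ℝ := ∑ i, |x i|

/-- The elastic net objective. -/
noncomputable def elasticNetObj {m n : ℕ} (X : Matrix (Fin m) (Fin n) ℝ)
    (y : Fin m → ℝ) (lam mu : ℝ) (w : Fin n → ℝ) (θ : ℝ) : ℝ :=
  ∑ i, ((∑ j, X i j * w j) - θ - y i) ^ 2 +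
    lam * (mu * ∑ j, (w j) ^ 2 + (1 - mu) * l1norm w)

/-!
Suppose `w̄ j > w̄ k` and move mass `t ∈ [0, w̄ j - w̄ k]` from coordinate `j` to coordinate `k`.
This does not increase `‖w‖₁`, changes `‖w‖₂²` by `2t² - 2t(w̄ j - w̄ k)` and the residual
`r = Xw̄ - θ̄𝐞 - y` by `t(x_k - x_j)`. Minimality of `(w̄, θ̄)` therefore forces the first-order
coefficient in `t` to be nonnegative: `λμ(w̄ j - w̄ k) ≤ ⟨r, x_k - x_j⟩`. Cauchy–Schwarz bounds the
right side by `‖r‖₂ ‖x_k - x_j‖₂`, where `‖x_k - x_j‖₂² = 2(1 - x_jᵀx_k)` for unit columns, and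
comparing with `(0, 0)` gives `‖r‖₂ ≤ ‖y‖₂ ≤ ‖y‖₁`.
-/

open Filter Topology

lemma abs_sub_add_abs_add_le {a b t : ℝ} (ht : 0 ≤ t) (hta : t ≤ a - b) :
    |a - t| + |b + t| ≤ |a| + |b| := by
  rcases abs_cases (a - t) with ⟨h₁, s₁⟩ | ⟨h₁, s₁⟩ <;>
  rcases abs_cases (b + t) with ⟨h₂, s₂⟩ | ⟨h₂, s₂⟩ <;>
  rcases abs_cases a with ⟨h₃, s₃⟩ | ⟨h₃, s₃⟩ <;>
  rcases abs_cases b with ⟨h₄, s₄⟩ | ⟨h₄, s₄⟩ <;>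
  rw [h₁, h₂, h₃, h₄] <;> linarith

lemma nonneg_of_forall_mem_Ioc_mul_add_mul_sq_nonneg {a b d : ℝ} (hd : 0 < d)
    (h : ∀ t ∈ Set.Ioc 0 d, 0 ≤ b * t + a * t ^ 2) : 0 ≤ b := by
  have hev : ∀ᶠ t in 𝓝[>] (0 : ℝ), 0 ≤ b + a * t := by
    filter_upwards [Ioc_mem_nhdsGT hd] with t ht
    exact nonneg_of_mul_nonneg_right (by linear_combination h t ht) ht.1
  have hlim : Tendsto (fun t : ℝ => b + a * t) (𝓝[>] 0) (𝓝 b) := by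
    have hcont : Continuous fun t : ℝ => b + a * t := by fun_prop
    simpa using (hcont.tendsto 0).mono_left nhdsWithin_le_nhds
  exact ge_of_tendsto hlim hev

section Transfer

variable {ι : Type*} [Fintype ι] [DecidableEq ι]

lemma sum_apply_update {M : Type*} [AddCommGroup M] {β : Type*} (F : ι → β → M) (w : ι → β)
    (j : ι) (a : β) :
    ∑ l, F l (Function.update w j a l) = ∑ l, F l (w l) + (F j a - F j (w j)) := by
  simp_rw [Function.apply_update F w j a]
  rw [sum_update_of_mem (mem_univ j),
    sum_eq_add_sum_sdiff_singleton_of_mem (mem_univ j) fun l => F l (w l)]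
  abel

def transfer (w : ι → ℝ) (j k : ι) (t : ℝ) : ι → ℝ :=
  Function.update (Function.update w j (w j - t)) k (w k + t)

variable {w : ι → ℝ} {j k : ι} {t : ℝ}

lemma sum_apply_transfer {M : Type*} [AddCommGroup M] (F : ι → ℝ → M) (hjk : j ≠ k) :
    ∑ l, F l (transfer w j k t l) =
      ∑ l, F l (w l) + (F j (w j - t) - F j (w j)) + (F k (w k + t) - F k (w k)) := by
  rw [transfer, sum_apply_update, sum_apply_update, Function.update_of_ne hjk.symm]

lemma sum_mul_transfer (x : ι → ℝ) (hjk : j ≠ k) :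
    ∑ l, x l * transfer w j k t l = ∑ l, x l * w l + t * (x k - x j) := by
  rw [sum_apply_transfer (fun l v => x l * v) hjk]
  ring

lemma sum_sq_transfer (hjk : j ≠ k) :
    ∑ l, transfer w j k t l ^ 2 = ∑ l, w l ^ 2 + 2 * t ^ 2 - 2 * t * (w j - w k) := by
  rw [sum_apply_transfer (fun _ v => v ^ 2) hjk]
  ring

end Transfer

lemma l1norm_transfer_le {n : ℕ} {w : Fin n → ℝ} {j k : Fin n} {t : ℝ} (hjk : j ≠ k)
    (ht : 0 ≤ t) (hta : t ≤ w j - w k) : l1norm (transfer w j k t) ≤ l1norm w := by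
  unfold l1norm
  rw [sum_apply_transfer (fun _ v => |v|) hjk]
  linarith [abs_sub_add_abs_add_le ht hta]

lemma l1norm_nonneg {n : ℕ} (x : Fin n → ℝ) : 0 ≤ l1norm x :=
  sum_nonneg fun i _ => abs_nonneg (x i)

lemma sum_sq_le_l1norm_sq {n : ℕ} (y : Fin n → ℝ) : ∑ i, y i ^ 2 ≤ l1norm y ^ 2 := by
  simpa [l1norm, sq_abs] using
    sum_sq_le_sq_sum_of_nonneg (s := univ) (f := fun i => |y i|) fun i _ => abs_nonneg (y i)

lemma sum_sub_sq_eq_two_mul_one_sub {ι : Type*} [Fintype ι] {u v : ι → ℝ}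
    (hu : ∑ i, u i ^ 2 = 1) (hv : ∑ i, v i ^ 2 = 1) :
    ∑ i, (v i - u i) ^ 2 = 2 * (1 - ∑ i, u i * v i) := by
  have h : ∀ i, (v i - u i) ^ 2 = v i ^ 2 + u i ^ 2 - 2 * (u i * v i) := fun i => by ring
  simp only [h, sum_sub_distrib, sum_add_distrib, ← mul_sum, hu, hv]
  ring

section ElasticNet

variable {m n : ℕ} (X : Matrix (Fin m) (Fin n) ℝ) (y : Fin m → ℝ)

def elasticNetResidual (w : Fin n → ℝ) (θ : ℝ) (i : Fin m) : ℝ := (∑ l, X i l * w l) - θ - y i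

variable {X y} {lam mu : ℝ}

lemma elasticNetObj_transfer_le {w : Fin n → ℝ} {θ t : ℝ} {j k : Fin n} (hjk : j ≠ k)
    (hpen : 0 ≤ lam * (1 - mu)) (ht : 0 ≤ t) (hta : t ≤ w j - w k) :
    elasticNetObj X y lam mu (transfer w j k t) θ ≤ elasticNetObj X y lam mu w θ
      + 2 * t * ∑ i, elasticNetResidual X y w θ i * (X i k - X i j)
      + t ^ 2 * ∑ i, (X i k - X i j) ^ 2 + lam * mu * (2 * t ^ 2 - 2 * t * (w j - w k)) := by
  have hres : ∑ i, ((∑ l, X i l * transfer w j k t l) - θ - y i) ^ 2 =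
      ∑ i, elasticNetResidual X y w θ i ^ 2
        + 2 * t * ∑ i, elasticNetResidual X y w θ i * (X i k - X i j)
        + t ^ 2 * ∑ i, (X i k - X i j) ^ 2 := by
    simp only [sum_mul_transfer _ hjk, mul_sum, ← sum_add_distrib]
    exact sum_congr rfl fun i _ => by rw [elasticNetResidual]; ring
  have hl1 := mul_le_mul_of_nonneg_left (l1norm_transfer_le hjk ht hta) hpen
  rw [elasticNetObj, elasticNetObj, hres, sum_sq_transfer hjk]
  simp only [elasticNetResidual]
  linarith

lemma sum_elasticNetResidual_sq_le {wbar : Fin n → ℝ} {θbar : ℝ}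
    (hmin : ∀ w θ, elasticNetObj X y lam mu wbar θbar ≤ elasticNetObj X y lam mu w θ)
    (hlam : 0 ≤ lam) (hmu : mu ∈ Set.Icc 0 1) :
    ∑ i, elasticNetResidual X y wbar θbar i ^ 2 ≤ ∑ i, y i ^ 2 := by
  have h0 : elasticNetObj X y lam mu 0 0 = ∑ i, y i ^ 2 := by simp [elasticNetObj, l1norm]
  have hpen : 0 ≤ lam * (mu * ∑ l, wbar l ^ 2 + (1 - mu) * l1norm wbar) := by
    have := l1norm_nonneg wbar
    have := hmu.1; have := hmu.2
    positivity
  have h := hmin 0 0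
  rw [h0, elasticNetObj] at h
  exact le_of_add_le_of_nonneg_left h hpen

lemma mul_sub_le_sum_elasticNetResidual_mul {wbar : Fin n → ℝ} {θbar : ℝ}
    (hmin : ∀ w θ, elasticNetObj X y lam mu wbar θbar ≤ elasticNetObj X y lam mu w θ)
    (hlam : 0 ≤ lam) (hmu : mu ≤ 1) {j k : Fin n} (hkj : wbar k < wbar j) :
    lam * mu * (wbar j - wbar k) ≤ ∑ i, elasticNetResidual X y wbar θbar i * (X i k - X i j) := by
  have hjk : j ≠ k := fun h => hkj.ne (h ▸ rfl)
  have hpen : 0 ≤ lam * (1 - mu) := mul_nonneg hlam (sub_nonneg.2 hmu)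
  suffices 0 ≤ 2 * (∑ i, elasticNetResidual X y wbar θbar i * (X i k - X i j) -
      lam * mu * (wbar j - wbar k)) by linarith
  refine nonneg_of_forall_mem_Ioc_mul_add_mul_sq_nonneg (a := ∑ i, (X i k - X i j) ^ 2 +
    2 * (lam * mu)) (sub_pos.2 hkj) fun t ht => ?_
  linarith [hmin (transfer wbar j k t) θbar,
    elasticNetObj_transfer_le (X := X) (y := y) (θ := θbar) hjk hpen ht.1.le ht.2]

lemma elasticNet_sub_le {wbar : Fin n → ℝ} {θbar : ℝ}
    (hcols : ∀ j : Fin n, l2norm (fun i => X i j) = 1) (hlam : 0 < lam)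
    (hmu : mu ∈ Set.Ioo (0 : ℝ) 1)
    (hmin : ∀ w θ, elasticNetObj X y lam mu wbar θbar ≤ elasticNetObj X y lam mu w θ)
    (j k : Fin n) :
    wbar j - wbar k ≤ l1norm y / (lam * mu) * Real.sqrt (2 * (1 - ∑ i, X i j * X i k)) := by
  have hlm : 0 < lam * mu := mul_pos hlam hmu.1
  rcases le_or_gt (wbar j) (wbar k) with hjk | hkj
  · exact (sub_nonpos.2 hjk).trans <|
      mul_nonneg (div_nonneg (l1norm_nonneg y) hlm.le) (Real.sqrt_nonneg _)
  have hunit : ∀ l, ∑ i, X i l ^ 2 = 1 := fun l => Real.sqrt_eq_one.1 (hcols l)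
  have hres : Real.sqrt (∑ i, elasticNetResidual X y wbar θbar i ^ 2) ≤ l1norm y :=
    (Real.sqrt_le_sqrt ((sum_elasticNetResidual_sq_le hmin hlam.le ⟨hmu.1.le, hmu.2.le⟩).trans
      (sum_sq_le_l1norm_sq y))).trans_eq (Real.sqrt_sq (l1norm_nonneg y))
  rw [div_mul_eq_mul_div, le_div_iff₀ hlm, mul_comm]
  calc lam * mu * (wbar j - wbar k)
      ≤ ∑ i, elasticNetResidual X y wbar θbar i * (X i k - X i j) :=
        mul_sub_le_sum_elasticNetResidual_mul hmin hlam.le hmu.2.le hkj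
    _ ≤ Real.sqrt (∑ i, elasticNetResidual X y wbar θbar i ^ 2) *
          Real.sqrt (∑ i, (X i k - X i j) ^ 2) := Real.sum_mul_le_sqrt_mul_sqrt _ _ _
    _ ≤ l1norm y * Real.sqrt (2 * (1 - ∑ i, X i j * X i k)) := by
        rw [sum_sub_sq_eq_two_mul_one_sub (hunit j) (hunit k)]
        gcongr

end ElasticNet

theorem elastic_net_correlated_features_general {m n : ℕ}
    (X : Matrix (Fin m) (Fin n) ℝ) (y : Fin m → ℝ) (lam mu : ℝ)
    (hcols : ∀ j : Fin n, l2norm (fun i => X i j) = 1)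
    (hlam : 0 < lam) (hmu : mu ∈ Set.Ioo (0 : ℝ) 1)
    (wbar : Fin n → ℝ) (θbar : ℝ)
    (hmin : ∀ (w : Fin n → ℝ) (θ : ℝ),
      elasticNetObj X y lam mu wbar θbar ≤ elasticNetObj X y lam mu w θ)
    (j k : Fin n) :
    |wbar j - wbar k| ≤
      (l1norm y / (lam * mu)) * Real.sqrt (2 * (1 - ∑ i, X i j * X i k)) := by
  rw [abs_sub_le_iff]
  refine ⟨elasticNet_sub_le hcols hlam hmu hmin j k, ?_⟩
  simpa only [mul_comm (X _ k)] using elasticNet_sub_le hcols hlam hmu hmin k j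

theorem elastic_net_correlated_features {m n : ℕ}
    (X : Matrix (Fin m) (Fin n) ℝ) (y : Fin m → ℝ) (lam mu : ℝ)
    (hcols : ∀ j : Fin n, l2norm (fun i => X i j) = 1)
    (hcentered : ∑ i, y i = 0)
    (hlam : 0 < lam) (hmu : mu ∈ Set.Ioo (0 : ℝ) 1)
    (wbar : Fin n → ℝ) (θbar : ℝ)
    (hmin : ∀ (w : Fin n → ℝ) (θ : ℝ),
      elasticNetObj X y lam mu wbar θbar ≤ elasticNetObj X y lam mu w θ)
    (j k : Fin n) (hjk : 0 ≤ ∑ i, X i j * X i k) :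
    |wbar j - wbar k| ≤
      (l1norm y / (lam * mu)) * Real.sqrt (2 * (1 - ∑ i, X i j * X i k)) :=
  elastic_net_correlated_features_general X y lam mu hcols hlam hmu wbar θbar hmin j k
end

section
/- Suppose n ≥ 2k ≥ 2 and A ∈ ℝ^{m×n} satisfies the restricted isometry property of order 2k with constant δ_{2k} ∈ (0, 1/2]. Then m ≥ c·k·log(n/k), where c = 1/(2 log(√24 + 1)). -/
open Finset

/-- A vector is `k`-sparse if it has at most `k` nonzero components. -/
def KSparse {n : ℕ} (k : ℕ) (x : Fin n → ℝ) : Prop :=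
  Set.ncard {i : Fin n | x i ≠ 0} ≤ k

/-- `A` satisfies the restricted isometry property of order `k` with constant `δ`. -/
def RIP {m n : ℕ} (A : Matrix (Fin m) (Fin n) ℝ) (k : ℕ) (δ : ℝ) : Prop :=
  ∀ u : Fin n → ℝ, KSparse k u →
    (1 - δ) * ∑ i, (u i) ^ 2 ≤ ∑ i, (A.mulVec u i) ^ 2 ∧
    ∑ i, (A.mulVec u i) ^ 2 ≤ (1 + δ) * ∑ i, (u i) ^ 2

open MeasureTheory Metric Module
open scoped ENNReal

/-!
Let `𝒳` be a family of `k`-subsets of `Fin n` whose pairwise intersections have at most `3k/4`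
elements. RIP of order `2k` with `δ ≤ 1/2` puts the points `A 1_S` (`S ∈ 𝒳`) in the Euclidean ball
of radius `√(3k/2)` and keeps them `√(k/4)` apart, so comparing the volumes of disjoint balls gives
`|𝒳| ≤ (√24 + 1)^m`. A maximal such family has `|𝒳|² ≥ (n/k)^k` once `n ≥ 20k`, because each
`k`-set is close to at most `C(k, j) C(n, k - j)` others. Taking logarithms gives the bound; when
`n/k ≤ (√24 + 1)⁴` it already follows from `m ≥ 2k`, as RIP makes `A` injective on `2k`-sparse
vectors.
-/

theorem Finset.exists_pairwise_not_rel_card_le_mul {α : Type*} [DecidableEq α] (U : Finset α)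
    (r : α → α → Prop) [DecidableRel r] (hrefl : ∀ x ∈ U, r x x) (hsymm : ∀ x y, r x y → r y x)
    {b : ℕ} (hb : ∀ x ∈ U, #{y ∈ U | r x y} ≤ b) :
    ∃ X ⊆ U, (X : Set α).Pairwise (fun x y => ¬ r x y) ∧ #U ≤ #X * b := by
  obtain ⟨X, hX, hXmax⟩ := (U.powerset.filter fun X : Finset α =>
    (X : Set α).Pairwise fun x y => ¬ r x y).exists_max_image card ⟨∅, by simp⟩
  rw [mem_filter, mem_powerset] at hX
  obtain ⟨hXU, hXpair⟩ := hX
  refine ⟨X, hXU, hXpair, ?_⟩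
  have hcover : U ⊆ X.biUnion fun x => {y ∈ U | r x y} := by
    intro y hy
    by_contra hfar
    simp only [mem_biUnion, mem_filter, not_exists, not_and] at hfar
    have hyX : y ∉ X := fun h => hfar y h hy (hrefl y hy)
    have hins := hXmax (insert y X) <| by
      rw [mem_filter, mem_powerset, coe_insert]
      exact ⟨insert_subset hy hXU, hXpair.insert fun x hx _ =>
        ⟨fun h => hfar x hx hy (hsymm _ _ h), hfar x hx hy⟩⟩
    rw [card_insert_of_notMem hyX] at hins
    omega
  exact (card_le_card hcover).trans (card_biUnion_le_card_mul _ _ _ fun x hx => hb x (hXU hx))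

theorem card_filter_powersetCard_le_choose_mul_choose {α : Type*} [Fintype α] [DecidableEq α]
    (S : Finset α) (r j : ℕ) :
    #{T ∈ powersetCard r univ | j ≤ #(S ∩ T)} ≤
      (#S).choose j * (Fintype.card α).choose (r - j) := by
  have hcover : {T ∈ powersetCard r (univ : Finset α) | j ≤ #(S ∩ T)} ⊆
      (S.powersetCard j).biUnion fun U => {T ∈ powersetCard r univ | U ⊆ T} := by
    intro T hT
    rw [mem_filter] at hT
    obtain ⟨U, hU, hUcard⟩ := exists_subset_card_eq hT.2
    exact mem_biUnion.2 ⟨U, mem_powersetCard.2 ⟨hU.trans inter_subset_left, hUcard⟩,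
      mem_filter.2 ⟨hT.1, hU.trans inter_subset_right⟩⟩
  have hsupersets : ∀ U ∈ S.powersetCard j,
      #{T ∈ powersetCard r univ | U ⊆ T} ≤ (Fintype.card α).choose (r - j) := by
    intro U hU
    rw [mem_powersetCard] at hU
    rw [← card_univ (α := α), ← card_powersetCard]
    refine card_le_card_of_injOn (· \ U) (fun T hT => ?_) (fun T hT T' hT' h => ?_)
    · rw [mem_coe, mem_filter, mem_powersetCard] at hT
      simp [card_sdiff_of_subset hT.2, hT.1.2, hU.2]
    · rw [mem_coe, mem_filter, mem_powersetCard] at hT hT'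
      rw [← sdiff_union_of_subset hT.2, ← sdiff_union_of_subset hT'.2]
      exact congrArg (· ∪ U) h
  calc _ ≤ _ := card_le_card hcover
    _ ≤ #(S.powersetCard j) * _ := card_biUnion_le_card_mul _ _ _ hsupersets
    _ = _ := by rw [card_powersetCard]

theorem Nat.choose_sub_mul_pow_le {n k j : ℕ} (hjk : j ≤ k) (hkn : k ≤ n) :
    n.choose (k - j) * (n - k) ^ j ≤ n.choose k * k ^ j := by
  induction j with
  | zero => simp
  | succ j ih =>
    have hstep : n.choose (k - (j + 1)) * (n - k) ≤ n.choose (k - j) * k := by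
      have hpascal := Nat.choose_succ_right_eq n (k - (j + 1))
      rw [show k - (j + 1) + 1 = k - j by omega] at hpascal
      calc n.choose (k - (j + 1)) * (n - k) ≤ n.choose (k - (j + 1)) * (n - (k - (j + 1))) :=
            Nat.mul_le_mul_left _ (by omega)
        _ = n.choose (k - j) * (k - j) := hpascal.symm
        _ ≤ n.choose (k - j) * k := Nat.mul_le_mul_left _ (by omega)
    calc n.choose (k - (j + 1)) * (n - k) ^ (j + 1)
        = n.choose (k - (j + 1)) * (n - k) * (n - k) ^ j := by ring
      _ ≤ n.choose (k - j) * k * (n - k) ^ j := Nat.mul_le_mul_right _ hstep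
      _ = n.choose (k - j) * (n - k) ^ j * k := by ring
      _ ≤ n.choose k * k ^ j * k := Nat.mul_le_mul_right _ (ih (by omega))
      _ = n.choose k * k ^ (j + 1) := by ring

theorem pow_le_sq_of_sub_one_pow_le {x N : ℝ} {j k : ℕ} (hx : 20 ≤ x)
    (hjk : 3 * k ≤ 4 * j) (h : (x - 1) ^ j ≤ N * 2 ^ k) : x ^ k ≤ N ^ 2 := by
  have hx1 : 1 ≤ x - 1 := by linarith
  have hcube : 16 * x ^ 2 ≤ (x - 1) ^ 3 := by nlinarith
  have hupper : (x - 1) ^ (3 * k) ≤ (N ^ 2) ^ 2 * 16 ^ k := calc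
    (x - 1) ^ (3 * k) ≤ (x - 1) ^ (4 * j) := pow_le_pow_right₀ hx1 hjk
    _ = ((x - 1) ^ j) ^ 4 := by ring
    _ ≤ (N * 2 ^ k) ^ 4 := pow_le_pow_left₀ (by positivity) h 4
    _ = (N ^ 2) ^ 2 * (2 ^ 4) ^ k := by rw [← pow_mul (2 : ℝ) 4 k]; ring
    _ = (N ^ 2) ^ 2 * 16 ^ k := by norm_num
  have hlower : (x ^ k) ^ 2 * 16 ^ k ≤ (x - 1) ^ (3 * k) := calc
    (x ^ k) ^ 2 * 16 ^ k = (16 * x ^ 2) ^ k := by ring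
    _ ≤ ((x - 1) ^ 3) ^ k := pow_le_pow_left₀ (by positivity) hcube k
    _ = (x - 1) ^ (3 * k) := (pow_mul _ _ _).symm
  have hsq : (x ^ k) ^ 2 ≤ (N ^ 2) ^ 2 :=
    le_of_mul_le_mul_right (hlower.trans hupper) (by positivity)
  exact (pow_le_pow_iff_left₀ (by positivity) (by positivity) two_ne_zero).1 hsq

theorem exists_family_pairwise_card_inter_lt {n k j : ℕ} (hjk : j ≤ k) (hkn : k ≤ n) :
    ∃ 𝒳 : Finset (Finset (Fin n)), (∀ S ∈ 𝒳, #S = k) ∧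
      (𝒳 : Set (Finset (Fin n))).Pairwise (fun S T => #(S ∩ T) < j) ∧
      (n - k) ^ j ≤ #𝒳 * 2 ^ k * k ^ j := by
  obtain ⟨𝒳, h𝒳, hpair, hcard⟩ :=
    (powersetCard k (univ : Finset (Fin n))).exists_pairwise_not_rel_card_le_mul
    (fun S T => j ≤ #(S ∩ T)) (fun S hS => by simpa [(mem_powersetCard.1 hS).2] using hjk)
    (fun S T h => by rwa [inter_comm]) (b := k.choose j * n.choose (k - j)) fun S hS => by
      simpa [(mem_powersetCard.1 hS).2] using card_filter_powersetCard_le_choose_mul_choose S k j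
  refine ⟨𝒳, fun S hS => (mem_powersetCard.1 (h𝒳 hS)).2, hpair.mono' fun S T h => not_le.1 h, ?_⟩
  rw [card_powersetCard, card_univ, Fintype.card_fin] at hcard
  have hpos : 0 < n.choose (k - j) := Nat.choose_pos (by omega)
  refine Nat.le_of_mul_le_mul_left ?_ hpos
  calc n.choose (k - j) * (n - k) ^ j ≤ n.choose k * k ^ j := Nat.choose_sub_mul_pow_le hjk hkn
    _ ≤ #𝒳 * (k.choose j * n.choose (k - j)) * k ^ j := Nat.mul_le_mul_right _ hcard
    _ ≤ #𝒳 * (2 ^ k * n.choose (k - j)) * k ^ j := by gcongr; exact Nat.choose_le_two_pow k j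
    _ = n.choose (k - j) * (#𝒳 * 2 ^ k * k ^ j) := by ring

theorem exists_family_pairwise_card_inter_le {n k : ℕ} (hk : 1 ≤ k) (hn : 20 ≤ (n : ℝ) / k) :
    ∃ 𝒳 : Finset (Finset (Fin n)), (∀ S ∈ 𝒳, #S = k) ∧
      (𝒳 : Set (Finset (Fin n))).Pairwise (fun S T => 4 * #(S ∩ T) ≤ 3 * k) ∧
      ((n : ℝ) / k) ^ k ≤ (#𝒳 : ℝ) ^ 2 := by
  have hkR : (0 : ℝ) < k := by exact_mod_cast hk
  have hkn : k ≤ n := by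
    rw [le_div_iff₀ hkR] at hn
    exact_mod_cast (by linarith : (k : ℝ) ≤ n)
  obtain ⟨𝒳, hcard, hpair, hsize⟩ :=
    exists_family_pairwise_card_inter_lt (j := 3 * k / 4 + 1) (by omega) hkn
  refine ⟨𝒳, hcard, hpair.mono' fun S T h => by omega, ?_⟩
  refine pow_le_sq_of_sub_one_pow_le hn (by omega : 3 * k ≤ 4 * (3 * k / 4 + 1)) ?_
  rw [div_sub_one hkR.ne', div_pow, div_le_iff₀ (by positivity)]
  have hsizeR : ((n - k : ℕ) : ℝ) ^ (3 * k / 4 + 1) ≤ #𝒳 * 2 ^ k * k ^ (3 * k / 4 + 1) := by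
    exact_mod_cast hsize
  rwa [Nat.cast_sub hkn] at hsizeR

theorem card_le_of_norm_le_of_pairwise_le_dist {E ι : Type*} [NormedAddCommGroup E]
    [NormedSpace ℝ E] [FiniteDimensional ℝ E] {s : Finset ι} {p : ι → E} {R d : ℝ}
    (hR : 0 ≤ R) (hd : 0 < d) (hnorm : ∀ i ∈ s, ‖p i‖ ≤ R)
    (hsep : (s : Set ι).Pairwise fun i j => d ≤ dist (p i) (p j)) :
    (#s : ℝ) ≤ (2 * R / d + 1) ^ finrank ℝ E := by
  borelize E
  set N := finrank ℝ E
  have hr : 0 < d / 2 := half_pos hd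
  have hdisj : (s : Set ι).PairwiseDisjoint fun i => ball (p i) (d / 2) :=
    fun i hi j hj hij => ball_disjoint_ball (by linarith [hsep hi hj hij])
  have hsub : ⋃ i ∈ s, ball (p i) (d / 2) ⊆ ball 0 (R + d / 2) :=
    Set.iUnion₂_subset fun i hi => ball_subset_ball' (by simpa using by linarith [hnorm i hi])
  have hvol : (#s : ℝ≥0∞) * ENNReal.ofReal ((d / 2) ^ N) ≤ ENNReal.ofReal ((R + d / 2) ^ N) := by
    have := measure_mono (μ := Measure.addHaar) hsub
    rw [measure_biUnion_finset hdisj fun _ _ => measurableSet_ball,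
      Measure.addHaar_ball_of_pos _ _ (r := R + d / 2) (by linarith), sum_congr rfl fun i _ =>
      Measure.addHaar_ball_of_pos _ _ hr, sum_const, nsmul_eq_mul, ← mul_assoc] at this
    exact (ENNReal.mul_le_mul_iff_left (measure_ball_pos _ _ one_pos).ne'
      measure_ball_lt_top.ne).1 this
  rw [← ENNReal.ofReal_natCast, ← ENNReal.ofReal_mul (by positivity),
    ENNReal.ofReal_le_ofReal_iff (by positivity)] at hvol
  calc (#s : ℝ) ≤ (R + d / 2) ^ N / (d / 2) ^ N := by rw [le_div_iff₀ (by positivity)]; exact hvol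
    _ = (2 * R / d + 1) ^ N := by rw [← div_pow]; congr 1; field_simp

theorem ksparse_of_support_subset {n k : ℕ} {u : Fin n → ℝ} (s : Finset (Fin n)) (hs : #s ≤ k)
    (hu : ∀ i, u i ≠ 0 → i ∈ s) : KSparse k u :=
  (Set.ncard_le_ncard (fun i hi => hu i hi) s.finite_toSet).trans (by rwa [Set.ncard_coe_finset])

theorem sum_sq_indicator_sub_indicator {n : ℕ} (S T : Finset (Fin n)) :
    ∑ i, ((S : Set (Fin n)).indicator 1 i - (T : Set (Fin n)).indicator 1 i : ℝ) ^ 2 =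
      #S + #T - 2 * #(S ∩ T) := by
  have hpoint : ∀ i, ((S : Set (Fin n)).indicator 1 i - (T : Set (Fin n)).indicator 1 i : ℝ) ^ 2 =
      (if i ∈ S then 1 else 0) + (if i ∈ T then 1 else 0) - 2 * (if i ∈ S ∩ T then 1 else 0) := by
    intro i
    by_cases hS : i ∈ S <;> by_cases hT : i ∈ T <;> norm_num [hS, hT]
  simp only [hpoint, sum_sub_distrib, sum_add_distrib, ← mul_sum, sum_boole, filter_mem_eq_inter,
    univ_inter]

namespace RIP

variable {m n : ℕ} {A : Matrix (Fin m) (Fin n) ℝ} {δ : ℝ}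

theorem eq_zero_of_mulVec_eq_zero {s : ℕ} (hA : RIP A s δ) (hδ : δ < 1) {u : Fin n → ℝ}
    (hu : KSparse s u) (hAu : A.mulVec u = 0) : u = 0 := by
  have hlower := (hA u hu).1
  rw [hAu] at hlower
  simp only [Pi.zero_apply, zero_pow two_ne_zero, sum_const_zero] at hlower
  have hsum : ∑ i, u i ^ 2 = 0 :=
    le_antisymm (nonpos_of_mul_nonpos_right hlower (by linarith)) (by positivity)
  funext i
  simpa using (sum_eq_zero_iff_of_nonneg fun i _ => sq_nonneg (u i)).1 hsum i (mem_univ i)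

theorem le_of_lt_one {s : ℕ} (hA : RIP A s δ) (hδ : δ < 1) (hs : s ≤ n) : s ≤ m := by
  let e := Fin.castLE hs
  have he : Function.Injective e := Fin.castLE_injective hs
  have hinj : Function.Injective (A.mulVecLin ∘ₗ Function.ExtendByZero.linearMap ℝ e) := by
    rw [← LinearMap.ker_eq_bot, LinearMap.ker_eq_bot']
    intro v hv
    have hsparse : KSparse s (Function.extend e v 0) := by
      refine ksparse_of_support_subset (univ.image e) (card_image_le.trans (by simp)) ?_
      intro i hi
      by_contra hi'
      exact hi (Function.extend_apply' _ _ _ (by simpa using hi'))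
    have hzero := hA.eq_zero_of_mulVec_eq_zero hδ hsparse hv
    funext j
    simpa [he.extend_apply] using congrFun hzero (e j)
  simpa using LinearMap.finrank_le_finrank_of_injective hinj

theorem sq_dist_mulVec_indicator_bounds {k : ℕ} (hA : RIP A (2 * k) δ) {S T : Finset (Fin n)}
    (hS : #S ≤ k) (hT : #T ≤ k) :
    (1 - δ) * (#S + #T - 2 * #(S ∩ T)) ≤
        dist (WithLp.toLp 2 (A.mulVec ((S : Set (Fin n)).indicator 1)))
          (WithLp.toLp 2 (A.mulVec ((T : Set (Fin n)).indicator 1))) ^ 2 ∧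
      dist (WithLp.toLp 2 (A.mulVec ((S : Set (Fin n)).indicator 1)))
          (WithLp.toLp 2 (A.mulVec ((T : Set (Fin n)).indicator 1))) ^ 2 ≤
        (1 + δ) * (#S + #T - 2 * #(S ∩ T)) := by
  have hsparse :
      KSparse (2 * k) ((S : Set (Fin n)).indicator 1 - (T : Set (Fin n)).indicator 1) := by
    refine ksparse_of_support_subset (S ∪ T) ((card_union_le S T).trans (by omega)) fun i hi => ?_
    by_contra hST
    simp_all
  rw [EuclideanSpace.dist_eq, Real.sq_sqrt (by positivity), ← sum_sq_indicator_sub_indicator]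
  simpa only [Real.dist_eq, sq_abs, ← Pi.sub_apply, ← Matrix.mulVec_sub] using hA _ hsparse

theorem card_le_of_pairwise_card_inter_le {k : ℕ} (hA : RIP A (2 * k) δ) (hδ : δ ≤ 1 / 2)
    (hk : 1 ≤ k) {𝒳 : Finset (Finset (Fin n))} (hcard : ∀ S ∈ 𝒳, #S = k)
    (hpair : (𝒳 : Set (Finset (Fin n))).Pairwise fun S T => 4 * #(S ∩ T) ≤ 3 * k) :
    (#𝒳 : ℝ) ≤ (√24 + 1) ^ m := by
  have hkR : (0 : ℝ) < k := by exact_mod_cast hk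
  set p : Finset (Fin n) → EuclideanSpace ℝ (Fin m) :=
    fun S => WithLp.toLp 2 (A.mulVec ((S : Set (Fin n)).indicator 1))
  have hp0 : p ∅ = 0 := by
    simp only [p, coe_empty, Set.indicator_empty', Matrix.mulVec_zero, WithLp.toLp_zero]
  have hnorm : ∀ S ∈ 𝒳, ‖p S‖ ≤ √(3 * k / 2) := by
    intro S hS
    have hupper := (hA.sq_dist_mulVec_indicator_bounds (hcard S hS).le (T := ∅) (Nat.zero_le k)).2
    change dist (p S) (p ∅) ^ 2 ≤ _ at hupper
    rw [hp0, dist_zero_right, hcard S hS, inter_empty, card_empty, Nat.cast_zero] at hupper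
    rw [Real.le_sqrt (norm_nonneg _) (by positivity)]
    nlinarith
  have hsep : (𝒳 : Set (Finset (Fin n))).Pairwise fun S T => √(k / 4) ≤ dist (p S) (p T) := by
    intro S hS T hT hST
    have hlower := (hA.sq_dist_mulVec_indicator_bounds (hcard S hS).le (hcard T hT).le).1
    have hinter : 4 * (#(S ∩ T) : ℝ) ≤ 3 * k := by exact_mod_cast hpair hS hT hST
    rw [hcard S hS, hcard T hT] at hlower
    rw [Real.sqrt_le_left dist_nonneg]
    nlinarith
  have hratio : 2 * √(3 * k / 2) / √(k / 4) = √24 := by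
    rw [div_eq_iff (by positivity), ← Real.sqrt_mul (by norm_num),
      show (24 : ℝ) * (k / 4) = 4 * (3 * k / 2) by ring, Real.sqrt_mul (by norm_num),
      show (4 : ℝ) = 2 ^ 2 by norm_num, Real.sqrt_sq (by norm_num)]
  have hpacking := card_le_of_norm_le_of_pairwise_le_dist (by positivity) (by positivity) hnorm hsep
  rwa [finrank_euclideanSpace_fin, hratio] at hpacking

end RIP

theorem rip_lower_bound_on_measurements {m n k : ℕ}
    (hk : 1 ≤ k) (hn : 2 * k ≤ n)
    (A : Matrix (Fin m) (Fin n) ℝ) (δ : ℝ)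
    (hδ : δ ∈ Set.Ioc (0 : ℝ) (1 / 2))
    (hRIP : RIP A (2 * k) δ) :
    (m : ℝ) ≥ (1 / (2 * Real.log (Real.sqrt 24 + 1))) * k * Real.log ((n : ℝ) / k) := by
  obtain ⟨-, hδ⟩ := hδ
  have hkR : (0 : ℝ) < k := by exact_mod_cast hk
  have hnk : (0 : ℝ) < n / k := div_pos (by exact_mod_cast (by omega : 0 < n)) hkR
  have h4 : (4 : ℝ) ≤ √24 := Real.le_sqrt_of_sq_le (by norm_num)
  set L := Real.log (√24 + 1)
  have hL : 0 < L := Real.log_pos (by linarith)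
  rw [ge_iff_le, mul_assoc, one_div_mul_eq_div, div_le_iff₀ (by positivity)]
  rcases le_or_gt ((n : ℝ) / k) ((√24 + 1) ^ 4) with hsmall | hlarge
  · have hm : ((2 * k : ℕ) : ℝ) ≤ m := by exact_mod_cast hRIP.le_of_lt_one (by linarith) hn
    have hlog : Real.log (n / k) ≤ 4 * L := by
      simpa [L, Real.log_pow] using Real.log_le_log hnk hsmall
    push_cast at hm
    calc k * Real.log (n / k) ≤ k * (4 * L) := by gcongr
      _ = 2 * k * (2 * L) := by ring
      _ ≤ m * (2 * L) := by gcongr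
  · have h20 : (20 : ℝ) ≤ n / k := calc
      (20 : ℝ) ≤ 5 ^ 4 := by norm_num
      _ ≤ (√24 + 1) ^ 4 := by gcongr; linarith
      _ ≤ n / k := hlarge.le
    obtain ⟨𝒳, hcard, hpair, hsize⟩ := exists_family_pairwise_card_inter_le hk h20
    have hN := hRIP.card_le_of_pairwise_card_inter_le hδ hk hcard hpair
    have hpow : ((n : ℝ) / k) ^ k ≤ (√24 + 1) ^ (2 * m) := by
      rw [pow_mul']
      exact hsize.trans (pow_le_pow_left₀ (by positivity) hN 2)
    have hlog := Real.log_le_log (by positivity) hpow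
    rw [Real.log_pow, Real.log_pow] at hlog
    push_cast at hlog
    linarith
end

section
/- Suppose n ≥ 2k ≥ 2, A ∈ ℝ^{m×n} satisfies the restricted isometry property of order 2k with constant δ_{2k} < √2 − 1, and y = Ax + η for some x ∈ ℝⁿ and η ∈ ℝ^m with ‖η‖₂ ≤ ε. Let x̂ be any minimizer of ‖z‖₁ over the set B_ε(y) = {z ∈ ℝⁿ : ‖y − Az‖₂ ≤ ε}. Then ‖x̂ − x‖₂ ≤ C₀·σ_k(x,‖·‖₁)/√k + C₂·ε, where C₀ = 2(1 + (√2−1)δ_{2k}) / (1 − (√2+1)δ_{2k}) and C₂ = 4√(1+δ_{2k}) / (1 − (√2+1)δ_{2k}). -/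
open Finset

/-- The sparsity measure `σ_k(x, ‖·‖₁)`. -/
noncomputable def sigmaL1 {n : ℕ} (k : ℕ) (x : Fin n → ℝ) : ℝ :=
  sInf {r : ℝ | ∃ z : Fin n → ℝ, KSparse k z ∧ r = l1norm (x - z)}

open Matrix

/-!
Put `h = x̂ - x` and let `T₀` carry a best `k`-term approximation of `x`. Since `x` is feasible,
`‖x̂‖₁ ≤ ‖x‖₁` puts `h` in the cone `‖h_{T₀ᶜ}‖₁ ≤ ‖h_{T₀}‖₁ + 2 σ_k(x)`, and since `x` and `x̂` both
lie in the tube, `‖Ah‖₂ ≤ 2ε`. Cutting `T₀ᶜ` into blocks `T₁, T₂, …` of size `k` by decreasing `|hᵢ|`,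
each entry on `Tⱼ₊₁` is at most the mean modulus on `Tⱼ`, so `∑_{j ≥ 2} ‖h_{Tⱼ}‖₂ ≤ ‖h_{T₀ᶜ}‖₁ / √k`.
The RIP gives `|⟪Au, Av⟫| ≤ δ ‖u‖₂ ‖v‖₂` for disjointly supported sparse `u`, `v`; expanding
`‖A h_{T₀ ∪ T₁}‖₂²` against `Ah` then bounds `(1 - δ) ‖h_{T₀ ∪ T₁}‖₂` by
`2 √(1 + δ) ε + √2 δ ∑_{j ≥ 2} ‖h_{Tⱼ}‖₂`, and the cone and tail estimates close the argument.
-/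

section L2
variable {n : ℕ}

lemma l2norm_eq_norm (v : Fin n → ℝ) : l2norm v = ‖WithLp.toLp 2 v‖ := by
  simp [l2norm, EuclideanSpace.norm_eq]

lemma l2norm_nonneg (v : Fin n → ℝ) : 0 ≤ l2norm v := Real.sqrt_nonneg _

lemma l2norm_sq_eq_sum (v : Fin n → ℝ) : l2norm v ^ 2 = ∑ i, v i ^ 2 :=
  Real.sq_sqrt (sum_nonneg fun _ _ => sq_nonneg _)

lemma l2norm_eq_zero {v : Fin n → ℝ} : l2norm v = 0 ↔ v = 0 := by
  simp [l2norm_eq_norm]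

lemma l2norm_add_le (u v : Fin n → ℝ) : l2norm (u + v) ≤ l2norm u + l2norm v := by
  simpa only [l2norm_eq_norm, WithLp.toLp_add] using norm_add_le _ _

lemma l2norm_sub_le (u v : Fin n → ℝ) : l2norm (u - v) ≤ l2norm u + l2norm v := by
  simpa only [l2norm_eq_norm, WithLp.toLp_sub] using norm_sub_le _ _

lemma l2norm_smul (c : ℝ) (v : Fin n → ℝ) : l2norm (c • v) = |c| * l2norm v := by
  simp [l2norm_eq_norm, norm_smul]

lemma l2norm_sum_le {ι : Type*} (s : Finset ι) (f : ι → Fin n → ℝ) :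
    l2norm (∑ j ∈ s, f j) ≤ ∑ j ∈ s, l2norm (f j) := by
  simpa only [l2norm_eq_norm, WithLp.toLp_sum] using norm_sum_le _ _

lemma dotProduct_le_l2norm_mul (u v : Fin n → ℝ) : u ⬝ᵥ v ≤ l2norm u * l2norm v := by
  simpa [l2norm_eq_norm, EuclideanSpace.inner_toLp_toLp, dotProduct_comm] using
    real_inner_le_norm (WithLp.toLp 2 u) (WithLp.toLp 2 v)

lemma l2norm_add_sq (u v : Fin n → ℝ) :
    l2norm (u + v) ^ 2 = l2norm u ^ 2 + 2 * (u ⬝ᵥ v) + l2norm v ^ 2 := by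
  simpa [l2norm_eq_norm, EuclideanSpace.inner_toLp_toLp, dotProduct_comm] using
    norm_add_sq_real (WithLp.toLp 2 u) (WithLp.toLp 2 v)

lemma l2norm_sub_sq (u v : Fin n → ℝ) :
    l2norm (u - v) ^ 2 = l2norm u ^ 2 - 2 * (u ⬝ᵥ v) + l2norm v ^ 2 := by
  simpa [l2norm_eq_norm, EuclideanSpace.inner_toLp_toLp, dotProduct_comm] using
    norm_sub_sq_real (WithLp.toLp 2 u) (WithLp.toLp 2 v)

lemma l2norm_sq_eq_dotProduct (v : Fin n → ℝ) : l2norm v ^ 2 = v ⬝ᵥ v := by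
  rw [l2norm_sq_eq_sum]
  simp only [dotProduct, sq]

lemma l2norm_neg (v : Fin n → ℝ) : l2norm (-v) = l2norm v := by
  simp [l2norm_eq_norm]

lemma dotProduct_eq_zero_of_disjoint_support {u v : Fin n → ℝ}
    (h : Disjoint (Function.support u) (Function.support v)) : u ⬝ᵥ v = 0 := by
  refine sum_eq_zero fun i _ => ?_
  by_cases hu : u i = 0
  · rw [hu, zero_mul]
  · rw [Function.notMem_support.mp (Set.disjoint_left.mp h hu), mul_zero]

lemma l2norm_indicator_sq (S : Finset (Fin n)) (v : Fin n → ℝ) :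
    l2norm (Set.indicator ↑S v) ^ 2 = ∑ i ∈ S, v i ^ 2 := by
  rw [l2norm_sq_eq_sum, ← sum_indicator_subset _ (subset_univ S)]
  exact sum_congr rfl fun i _ => by by_cases hi : i ∈ S <;> simp [hi]

lemma l2norm_add_sq_of_disjoint {u v : Fin n → ℝ}
    (h : Disjoint (Function.support u) (Function.support v)) :
    l2norm (u + v) ^ 2 = l2norm u ^ 2 + l2norm v ^ 2 := by
  rw [l2norm_add_sq, dotProduct_eq_zero_of_disjoint_support h, mul_zero, add_zero]

lemma l2norm_le_l2norm_add_of_disjoint {u v : Fin n → ℝ}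
    (h : Disjoint (Function.support u) (Function.support v)) :
    l2norm u ≤ l2norm (u + v) := by
  refine (sq_le_sq₀ (l2norm_nonneg _) (l2norm_nonneg _)).mp ?_
  linarith [l2norm_add_sq_of_disjoint h, sq_nonneg (l2norm v)]

lemma l2norm_add_l2norm_le_of_disjoint {u v : Fin n → ℝ}
    (h : Disjoint (Function.support u) (Function.support v)) :
    l2norm u + l2norm v ≤ √2 * l2norm (u + v) := by
  refine (sq_le_sq₀ (add_nonneg (l2norm_nonneg u) (l2norm_nonneg v))
    (mul_nonneg (Real.sqrt_nonneg 2) (l2norm_nonneg _))).mp ?_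
  rw [mul_pow, Real.sq_sqrt zero_le_two, l2norm_add_sq_of_disjoint h]
  nlinarith [sq_nonneg (l2norm u - l2norm v)]

end L2

section Sparse
variable {n : ℕ}

lemma KSparse.of_support_subset {k : ℕ} {v : Fin n → ℝ} {S : Finset (Fin n)}
    (hv : Function.support v ⊆ S) (hS : S.card ≤ k) : KSparse k v :=
  (Set.ncard_le_ncard hv S.finite_toSet).trans (by rwa [Set.ncard_coe_finset])

lemma KSparse.indicator {k : ℕ} {S : Finset (Fin n)} (hS : S.card ≤ k) (v : Fin n → ℝ) :
    KSparse k (Set.indicator ↑S v) :=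
  .of_support_subset (Set.support_indicator_subset) hS

lemma KSparse.mono {k : ℕ} {u v : Fin n → ℝ}
    (huv : Function.support u ⊆ Function.support v) (hv : KSparse k v) : KSparse k u :=
  (Set.ncard_le_ncard huv (Set.toFinite _)).trans hv

lemma KSparse.of_support_subset_union {s t K : ℕ} {u v w : Fin n → ℝ} (hu : KSparse s u)
    (hv : KSparse t v) (hst : s + t ≤ K)
    (hw : Function.support w ⊆ Function.support u ∪ Function.support v) : KSparse K w :=
  (Set.ncard_le_ncard hw (Set.toFinite _)).trans
    ((Set.ncard_union_le _ _).trans ((add_le_add hu hv).trans hst))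

end Sparse

lemma l2norm_mulVec_sub_le {m n : ℕ} {A : Matrix (Fin m) (Fin n) ℝ} {x x' : Fin n → ℝ}
    {y : Fin m → ℝ} {ε : ℝ} (hx : l2norm (y - A *ᵥ x) ≤ ε) (hx' : l2norm (y - A *ᵥ x') ≤ ε) :
    l2norm (A *ᵥ (x' - x)) ≤ 2 * ε := by
  rw [mulVec_sub, ← sub_sub_sub_cancel_left _ _ y, two_mul]
  exact (l2norm_sub_le _ _).trans (add_le_add hx hx')

namespace RIP
variable {m n K : ℕ} {A : Matrix (Fin m) (Fin n) ℝ} {δ : ℝ}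

lemma lower (hA : RIP A K δ) {u : Fin n → ℝ} (hu : KSparse K u) :
    (1 - δ) * l2norm u ^ 2 ≤ l2norm (A *ᵥ u) ^ 2 := by
  simpa only [l2norm_sq_eq_sum] using (hA u hu).1

lemma upper (hA : RIP A K δ) {u : Fin n → ℝ} (hu : KSparse K u) :
    l2norm (A *ᵥ u) ^ 2 ≤ (1 + δ) * l2norm u ^ 2 := by
  simpa only [l2norm_sq_eq_sum] using (hA u hu).2

lemma l2norm_mulVec_le (hA : RIP A K δ) {u : Fin n → ℝ} (hu : KSparse K u) :
    l2norm (A *ᵥ u) ≤ √(1 + δ) * l2norm u := by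
  rw [l2norm, l2norm, ← Real.sqrt_mul' _ (sum_nonneg fun _ _ => sq_nonneg _)]
  exact Real.sqrt_le_sqrt (hA u hu).2

/-- By polarization `4 ⟪Au, Aw⟫ = ‖A(u + w)‖² - ‖A(u - w)‖²`, and `‖u + w‖ = ‖u - w‖` since the
supports are disjoint. -/
lemma dotProduct_mulVec_le_half {s t : ℕ} (hA : RIP A K δ) (hst : s + t ≤ K)
    {u w : Fin n → ℝ} (hu : KSparse s u) (hw : KSparse t w)
    (huw : Disjoint (Function.support u) (Function.support w)) :
    (A *ᵥ u) ⬝ᵥ (A *ᵥ w) ≤ δ / 2 * (l2norm u ^ 2 + l2norm w ^ 2) := by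
  have hsum : KSparse K (u + w) := hu.of_support_subset_union hw hst (Function.support_add u w)
  have hdiff : KSparse K (u - w) := hu.of_support_subset_union hw hst (Function.support_sub u w)
  replace hsum := hA.upper hsum
  replace hdiff := hA.lower hdiff
  have horth := dotProduct_eq_zero_of_disjoint_support huw
  rw [mulVec_add, l2norm_add_sq, l2norm_add_sq, horth] at hsum
  rw [mulVec_sub, l2norm_sub_sq, l2norm_sub_sq, horth] at hdiff
  linarith

/-- Applied to `‖w‖ • u` and `‖u‖ • w`, the symmetric bound becomes the product bound. -/
lemma dotProduct_mulVec_le {s t : ℕ} (hA : RIP A K δ) (hst : s + t ≤ K)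
    {u w : Fin n → ℝ} (hu : KSparse s u) (hw : KSparse t w)
    (huw : Disjoint (Function.support u) (Function.support w)) :
    (A *ᵥ u) ⬝ᵥ (A *ᵥ w) ≤ δ * l2norm u * l2norm w := by
  rcases (mul_nonneg (l2norm_nonneg u) (l2norm_nonneg w)).eq_or_lt with hab | hab
  · rcases mul_eq_zero.mp hab.symm with hu0 | hw0
    · rw [hu0, mul_zero, zero_mul, l2norm_eq_zero.mp hu0, mulVec_zero, zero_dotProduct]
    · rw [hw0, mul_zero, l2norm_eq_zero.mp hw0, mulVec_zero, dotProduct_zero]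
  have hsmul := hA.dotProduct_mulVec_le_half hst (u := l2norm w • u) (w := l2norm u • w)
    (hu.mono (Function.support_const_smul_subset _ u))
    (hw.mono (Function.support_const_smul_subset _ w))
    (huw.mono (Function.support_const_smul_subset _ u) (Function.support_const_smul_subset _ w))
  rw [mulVec_smul, mulVec_smul, smul_dotProduct, dotProduct_smul, l2norm_smul, l2norm_smul,
    abs_of_nonneg (l2norm_nonneg w), abs_of_nonneg (l2norm_nonneg u)] at hsmul
  simp only [smul_eq_mul] at hsmul
  exact le_of_mul_le_mul_left (by linarith) hab

lemma abs_dotProduct_mulVec_le {s t : ℕ} (hA : RIP A K δ) (hst : s + t ≤ K)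
    {u w : Fin n → ℝ} (hu : KSparse s u) (hw : KSparse t w)
    (huw : Disjoint (Function.support u) (Function.support w)) :
    |(A *ᵥ u) ⬝ᵥ (A *ᵥ w)| ≤ δ * l2norm u * l2norm w := by
  have hneg := hA.dotProduct_mulVec_le hst hu (w := -w)
    (hw.mono (Function.support_neg w).subset) (by rwa [Function.support_neg])
  rw [mulVec_neg, dotProduct_neg, l2norm_neg] at hneg
  exact abs_le.mpr ⟨by linarith, hA.dotProduct_mulVec_le hst hu hw huw⟩

lemma one_sub_mul_l2norm_add_le {k : ℕ} (hA : RIP A (2 * k) δ) (hδ : 0 ≤ δ)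
    {ι : Type*} [Fintype ι] {u₀ u₁ : Fin n → ℝ} {w : ι → Fin n → ℝ}
    (hu₀ : KSparse k u₀) (hu₁ : KSparse k u₁) (hw : ∀ j, KSparse k (w j))
    (h01 : Disjoint (Function.support u₀) (Function.support u₁))
    (h0w : ∀ j, Disjoint (Function.support u₀) (Function.support (w j)))
    (h1w : ∀ j, Disjoint (Function.support u₁) (Function.support (w j))) :
    (1 - δ) * l2norm (u₀ + u₁) ≤
      √(1 + δ) * l2norm (A *ᵥ (u₀ + u₁ + ∑ j, w j)) + √2 * δ * ∑ j, l2norm (w j) := by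
  set v := u₀ + u₁
  have hv : KSparse (2 * k) v :=
    hu₀.of_support_subset_union hu₁ (two_mul k).ge (Function.support_add u₀ u₁)
  have hcross : ∀ j, -((A *ᵥ v) ⬝ᵥ (A *ᵥ w j)) ≤ √2 * δ * l2norm v * l2norm (w j) := by
    intro j
    have h₀ := hA.abs_dotProduct_mulVec_le (two_mul k).ge hu₀ (hw j) (h0w j)
    have h₁ := hA.abs_dotProduct_mulVec_le (two_mul k).ge hu₁ (hw j) (h1w j)
    have h₀₁ := l2norm_add_l2norm_le_of_disjoint h01
    rw [mulVec_add, add_dotProduct]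
    linarith [neg_abs_le ((A *ᵥ u₀) ⬝ᵥ (A *ᵥ w j)), neg_abs_le ((A *ᵥ u₁) ⬝ᵥ (A *ᵥ w j)),
      mul_le_mul_of_nonneg_right h₀₁ (mul_nonneg hδ (l2norm_nonneg (w j)))]
  have hsplit : (A *ᵥ v) ⬝ᵥ (A *ᵥ v) =
      (A *ᵥ v) ⬝ᵥ (A *ᵥ (v + ∑ j, w j)) - ∑ j, (A *ᵥ v) ⬝ᵥ (A *ᵥ w j) := by
    rw [mulVec_add A v, dotProduct_add, mulVec_sum, dotProduct_sum, add_sub_cancel_right]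
  have hmain : (1 - δ) * l2norm v ^ 2 ≤
      l2norm v * (√(1 + δ) * l2norm (A *ᵥ (v + ∑ j, w j)) + √2 * δ * ∑ j, l2norm (w j)) := by
    calc (1 - δ) * l2norm v ^ 2 ≤ (A *ᵥ v) ⬝ᵥ (A *ᵥ v) := by
          rw [← l2norm_sq_eq_dotProduct]; exact hA.lower hv
      _ ≤ l2norm (A *ᵥ v) * l2norm (A *ᵥ (v + ∑ j, w j))
            + ∑ j, √2 * δ * l2norm v * l2norm (w j) := by
          rw [hsplit, sub_eq_add_neg, ← sum_neg_distrib]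
          exact add_le_add (dotProduct_le_l2norm_mul _ _) (sum_le_sum fun j _ => hcross j)
      _ ≤ _ := by
          rw [mul_add, ← mul_sum]
          have := mul_le_mul_of_nonneg_right (hA.l2norm_mulVec_le hv)
            (l2norm_nonneg (A *ᵥ (v + ∑ j, w j)))
          linarith
  rcases (l2norm_nonneg v).eq_or_lt with hv0 | hv0
  · rw [← hv0, mul_zero]
    exact add_nonneg (mul_nonneg (Real.sqrt_nonneg _) (l2norm_nonneg _))
      (mul_nonneg (mul_nonneg (Real.sqrt_nonneg _) hδ) (sum_nonneg fun j _ => l2norm_nonneg (w j)))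
  · exact le_of_mul_le_mul_left (by linarith) hv0

end RIP

lemma Finset.exists_subset_card_eq_forall_le {ι α : Type*} [DecidableEq ι] [LinearOrder α]
    (f : ι → α) (R : Finset ι) {k : ℕ} (hk : k ≤ R.card) :
    ∃ T ⊆ R, T.card = k ∧ ∀ i ∈ T, ∀ j ∈ R \ T, f j ≤ f i := by
  induction k with
  | zero => exact ⟨∅, empty_subset R, card_empty, by simp⟩
  | succ k ih =>
    obtain ⟨T, hTR, hTk, hTf⟩ := ih (by omega)
    have hne : (R \ T).Nonempty := by
      rw [← card_pos, card_sdiff_of_subset hTR]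
      omega
    obtain ⟨a, ha, hamax⟩ := exists_max_image (R \ T) f hne
    have haT : a ∉ T := (mem_sdiff.mp ha).2
    refine ⟨insert a T, insert_subset (mem_sdiff.mp ha).1 hTR, by rw [card_insert_of_notMem haT, hTk],
      fun i hi j hj => ?_⟩
    have hj' : j ∈ R \ T := by
      simp only [mem_sdiff, mem_insert, not_or] at hj ⊢
      exact ⟨hj.1, hj.2.2⟩
    rcases mem_insert.mp hi with rfl | hiT
    · exact hamax j hj'
    · exact hTf i hiT j hj'

section Shelling
variable {n : ℕ}

lemma sum_abs_le_sqrt_card_mul_l2norm_indicator (S : Finset (Fin n)) (v : Fin n → ℝ) :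
    ∑ i ∈ S, |v i| ≤ √S.card * l2norm (Set.indicator ↑S v) := by
  refine (sq_le_sq₀ (sum_nonneg fun _ _ => abs_nonneg _)
    (mul_nonneg (Real.sqrt_nonneg _) (l2norm_nonneg _))).mp ?_
  rw [mul_pow, Real.sq_sqrt (Nat.cast_nonneg _), l2norm_indicator_sq]
  simpa only [sq_abs] using sq_sum_le_card_mul_sum_sq (s := S) (f := fun i => |v i|)

lemma l2norm_indicator_le_of_forall_abs_le {k : ℕ} (hk : 0 < k) {v : Fin n → ℝ}
    {C T : Finset (Fin n)} (hC : C.card ≤ k) (hT : T.card = k)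
    (hCT : ∀ j ∈ C, ∀ i ∈ T, |v j| ≤ |v i|) :
    l2norm (Set.indicator ↑C v) ≤ (∑ i ∈ T, |v i|) / √k := by
  have hk' : (0 : ℝ) < k := Nat.cast_pos.mpr hk
  set S := ∑ i ∈ T, |v i|
  have hmean : ∀ j ∈ C, |v j| ≤ S / k := fun j hj => by
    rw [le_div_iff₀ hk', mul_comm, ← nsmul_eq_mul, ← hT]
    exact card_nsmul_le_sum T _ _ (hCT j hj)
  calc l2norm (Set.indicator ↑C v) = √(∑ j ∈ C, v j ^ 2) := by
        rw [← l2norm_indicator_sq, Real.sqrt_sq (l2norm_nonneg _)]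
    _ ≤ √(k * (S / k) ^ 2) := by
        refine Real.sqrt_le_sqrt ((sum_le_card_nsmul C _ ((S / k) ^ 2) fun j hj => ?_).trans ?_)
        · rw [← sq_abs]
          exact pow_le_pow_left₀ (abs_nonneg _) (hmean j hj) 2
        · rw [nsmul_eq_mul]
          exact mul_le_mul_of_nonneg_right (by exact_mod_cast hC) (sq_nonneg _)
    _ = S / √k := by
        rw [Real.sqrt_mul hk'.le, Real.sqrt_sq (div_nonneg (sum_nonneg fun _ _ => abs_nonneg _) hk'.le)]
        field_simp
        rw [Real.sq_sqrt hk'.le]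

/-- `T` holds the `k` largest entries of `v` on `R` and the `w j` are `v` on the following blocks
of at most `k` entries, in decreasing order of modulus. -/
theorem exists_indicator_eq_add_sum_sparse {k : ℕ} (hk : 0 < k) (v : Fin n → ℝ)
    (R : Finset (Fin n)) :
    ∃ T ⊆ R, T.card ≤ k ∧ ∃ (p : ℕ) (w : Fin p → Fin n → ℝ),
      Set.indicator ↑R v = Set.indicator ↑T v + ∑ j, w j ∧
      (∀ j, KSparse k (w j) ∧ Function.support (w j) ⊆ ↑(R \ T)) ∧
      ∑ j, l2norm (w j) ≤ (∑ i ∈ R, |v i|) / √k := by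
  induction R using Finset.strongInduction with
  | H R ih =>
  by_cases hRk : R.card ≤ k
  · refine ⟨R, subset_rfl, hRk, 0, Fin.elim0, by simp, fun j => j.elim0, ?_⟩
    simpa using div_nonneg (sum_nonneg fun i _ => abs_nonneg (v i)) (Real.sqrt_nonneg k)
  obtain ⟨T, hTR, hTk, hTv⟩ := exists_subset_card_eq_forall_le (|v ·|) R (not_le.mp hRk).le
  have hT : T.Nonempty := card_pos.mp (hTk ▸ hk)
  obtain ⟨T', hT'R, hT'k, p, w, hdec, hw, hwsum⟩ := ih (R \ T) (sdiff_ssubset hTR hT)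
  refine ⟨T, hTR, hTk.le, p + 1, Fin.cons (Set.indicator ↑T' v) w, ?_, ?_, ?_⟩
  · rw [Fin.sum_cons, ← hdec, coe_sdiff, Set.indicator_sdiff (coe_subset.mpr hTR)]
    abel
  · refine Fin.cases ⟨KSparse.indicator hT'k v, ?_⟩ fun j => ⟨(hw j).1, ?_⟩
    · exact Set.support_indicator_subset.trans (coe_subset.mpr hT'R)
    · exact (hw j).2.trans (coe_subset.mpr sdiff_subset)
  · rw [Fin.sum_univ_succ, Fin.cons_zero]
    simp only [Fin.cons_succ]
    have hhead : l2norm (Set.indicator ↑T' v) ≤ (∑ i ∈ T, |v i|) / √k :=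
      l2norm_indicator_le_of_forall_abs_le hk hT'k hTk fun j hj i hi => hTv i hi j (hT'R hj)
    rw [← sum_sdiff hTR, add_div]
    linarith

end Shelling

section BestTermApproximation
variable {n : ℕ}

lemma exists_card_le_sum_compl_le_sigmaL1 (k : ℕ) (x : Fin n → ℝ) :
    ∃ T : Finset (Fin n), T.card ≤ k ∧ ∑ i ∈ Tᶜ, |x i| ≤ sigmaL1 k x := by
  obtain ⟨T, hT, hTmin⟩ := exists_min_image ({T | T.card ≤ k} : Finset (Finset (Fin n)))
    (fun T => ∑ i ∈ Tᶜ, |x i|) ⟨∅, by simp⟩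
  refine ⟨T, (mem_filter.mp hT).2, le_csInf ⟨_, 0, by simp [KSparse], rfl⟩ ?_⟩
  rintro _ ⟨z, hz, rfl⟩
  set S : Finset (Fin n) := {i | z i ≠ 0}
  have hS : S.card ≤ k := by
    rwa [← Set.ncard_coe_finset, coe_filter_univ]
  calc ∑ i ∈ Tᶜ, |x i| ≤ ∑ i ∈ Sᶜ, |x i| :=
        hTmin _ (mem_filter.mpr ⟨mem_univ _, hS⟩)
    _ = ∑ i ∈ Sᶜ, |(x - z) i| :=
        sum_congr rfl fun i hi => by simp_all [S]
    _ ≤ l1norm (x - z) := sum_le_univ_sum_of_nonneg fun _ => abs_nonneg _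

lemma sum_compl_abs_le_of_l1norm_add_le {x h : Fin n → ℝ} (hxh : l1norm (x + h) ≤ l1norm x)
    (T : Finset (Fin n)) :
    ∑ i ∈ Tᶜ, |h i| ≤ ∑ i ∈ T, |h i| + 2 * ∑ i ∈ Tᶜ, |x i| := by
  have hT : ∑ i ∈ T, (|x i| - |h i|) ≤ ∑ i ∈ T, |x i + h i| :=
    sum_le_sum fun i _ => abs_sub_abs_le_abs_add _ _
  have hTc : ∑ i ∈ Tᶜ, (|h i| - |x i|) ≤ ∑ i ∈ Tᶜ, |x i + h i| :=
    sum_le_sum fun i _ => add_comm (h i) (x i) ▸ abs_sub_abs_le_abs_add _ _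
  rw [sum_sub_distrib] at hT hTc
  simp only [l1norm, Pi.add_apply] at hxh
  rw [← sum_add_sum_compl T, ← sum_add_sum_compl T (fun i => |x i|)] at hxh
  linarith

end BestTermApproximation

lemma one_sub_sqrt_two_add_one_mul_pos {δ : ℝ} (hδ : δ < √2 - 1) : 0 < 1 - (√2 + 1) * δ := by
  nlinarith [Real.sq_sqrt (zero_le_two : (0 : ℝ) ≤ 2), Real.one_lt_sqrt_two]

namespace RIP
variable {m n k : ℕ} {A : Matrix (Fin m) (Fin n) ℝ} {δ : ℝ}

/-- `a` is `‖h_{T₀ ∪ T₁}‖₂` and `ρ` the sum of the `ℓ²`-norms of the remaining blocks. -/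
lemma exists_head_tail_bounds (hA : RIP A (2 * k) δ) (hk : 1 ≤ k) (hδ : 0 ≤ δ) {h : Fin n → ℝ}
    {T₀ : Finset (Fin n)} (hT₀ : T₀.card ≤ k) {e : ℝ}
    (hcone : ∑ i ∈ T₀ᶜ, |h i| ≤ ∑ i ∈ T₀, |h i| + 2 * e) :
    ∃ a ρ : ℝ, l2norm h ≤ a + ρ ∧ ρ ≤ a + 2 * (e / √k) ∧
      (1 - δ) * a ≤ √(1 + δ) * l2norm (A *ᵥ h) + √2 * δ * ρ := by
  obtain ⟨T₁, hT₁, hT₁k, p, w, hdec, hw, hρ⟩ := exists_indicator_eq_add_sum_sparse hk h T₀ᶜ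
  set u₀ := Set.indicator ↑T₀ h
  set u₁ := Set.indicator ↑T₁ h
  have hsupp₀ : Function.support u₀ ⊆ ↑T₀ := Set.support_indicator_subset
  have hsupp₁ : Function.support u₁ ⊆ ↑T₀ᶜ :=
    Set.support_indicator_subset.trans (coe_subset.mpr hT₁)
  have h01 : Disjoint (Function.support u₀) (Function.support u₁) :=
    Set.disjoint_of_subset hsupp₀ hsupp₁ (disjoint_coe.mpr disjoint_compl_right)
  have hh : h = u₀ + u₁ + ∑ j, w j := by
    rw [add_assoc, ← hdec, coe_compl, Set.indicator_self_add_compl]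
  refine ⟨l2norm (u₀ + u₁), ∑ j, l2norm (w j), ?_, ?_, ?_⟩
  · rw [hh]
    exact (l2norm_add_le _ _).trans (add_le_add le_rfl (l2norm_sum_le _ _))
  · have hsqrtk : 0 < √(k : ℝ) := Real.sqrt_pos.mpr (by exact_mod_cast hk)
    have hhead : ∑ i ∈ T₀, |h i| ≤ √k * l2norm (u₀ + u₁) :=
      (sum_abs_le_sqrt_card_mul_l2norm_indicator T₀ h).trans (mul_le_mul
        (Real.sqrt_le_sqrt (by exact_mod_cast hT₀)) (l2norm_le_l2norm_add_of_disjoint h01)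
        (l2norm_nonneg _) (Real.sqrt_nonneg _))
    calc ∑ j, l2norm (w j) ≤ (∑ i ∈ T₀ᶜ, |h i|) / √k := hρ
      _ ≤ (√k * l2norm (u₀ + u₁) + 2 * e) / √k := by gcongr; linarith
      _ = l2norm (u₀ + u₁) + 2 * (e / √k) := by
        rw [add_div, mul_div_cancel_left₀ _ hsqrtk.ne', mul_div_assoc]
  · rw [hh]
    exact hA.one_sub_mul_l2norm_add_le hδ (KSparse.indicator hT₀ h)
      (KSparse.indicator hT₁k h) (fun j => (hw j).1) h01
      (fun j => Set.disjoint_of_subset hsupp₀ ((hw j).2.trans (coe_subset.mpr sdiff_subset))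
        (disjoint_coe.mpr disjoint_compl_right))
      (fun j => Set.disjoint_of_subset Set.support_indicator_subset (hw j).2
        (disjoint_coe.mpr disjoint_sdiff))

lemma l2norm_le_of_sum_compl_abs_le (hA : RIP A (2 * k) δ) (hk : 1 ≤ k) (hδ0 : 0 ≤ δ)
    (hδ : δ < √2 - 1) {h : Fin n → ℝ} {T₀ : Finset (Fin n)} (hT₀ : T₀.card ≤ k) {e ε : ℝ}
    (hcone : ∑ i ∈ T₀ᶜ, |h i| ≤ ∑ i ∈ T₀, |h i| + 2 * e) (htube : l2norm (A *ᵥ h) ≤ 2 * ε) :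
    l2norm h ≤ 2 * (1 + (√2 - 1) * δ) / (1 - (√2 + 1) * δ) * (e / √k) +
      4 * √(1 + δ) / (1 - (√2 + 1) * δ) * ε := by
  obtain ⟨a, ρ, hsplit, htail, hhead⟩ := hA.exists_head_tail_bounds hk hδ0 hT₀ hcone
  have hD := one_sub_sqrt_two_add_one_mul_pos hδ
  rw [div_mul_eq_mul_div, div_mul_eq_mul_div, ← add_div, le_div_iff₀ hD]
  linarith [mul_le_mul_of_nonneg_left htube (Real.sqrt_nonneg (1 + δ)),
    mul_le_mul_of_nonneg_left htail (by positivity : 0 ≤ √2 * δ),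
    mul_le_mul_of_nonneg_left hsplit hD.le, mul_le_mul_of_nonneg_left htail hD.le]

end RIP

theorem basis_pursuit_error_bound_general {m n k : ℕ}
    (hk : 1 ≤ k)
    (A : Matrix (Fin m) (Fin n) ℝ) (δ : ℝ) (hδ0 : 0 < δ)
    (hδ : δ < Real.sqrt 2 - 1)
    (hRIP : RIP A (2 * k) δ)
    (x : Fin n → ℝ) (η : Fin m → ℝ) (ε : ℝ) (hη : l2norm η ≤ ε)
    (y : Fin m → ℝ) (hy : y = A.mulVec x + η)
    (xhat : Fin n → ℝ)
    (hfeas : l2norm (y - A.mulVec xhat) ≤ ε)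
    (hopt : ∀ z : Fin n → ℝ, l2norm (y - A.mulVec z) ≤ ε → l1norm xhat ≤ l1norm z) :
    l2norm (xhat - x) ≤
      (2 * (1 + (Real.sqrt 2 - 1) * δ) / (1 - (Real.sqrt 2 + 1) * δ)) *
        (sigmaL1 k x / Real.sqrt k) +
      (4 * Real.sqrt (1 + δ) / (1 - (Real.sqrt 2 + 1) * δ)) * ε := by
  have hyx : y - A *ᵥ x = η := by rw [hy, add_sub_cancel_left]
  obtain ⟨T₀, hT₀, hσ⟩ := exists_card_le_sum_compl_le_sigmaL1 k x
  have hcone := sum_compl_abs_le_of_l1norm_add_le (x := x) (h := xhat - x)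
    (by rw [add_sub_cancel]; exact hopt x (hyx ▸ hη)) T₀
  refine (hRIP.l2norm_le_of_sum_compl_abs_le hk hδ0.le hδ hT₀ hcone
    (l2norm_mulVec_sub_le (hyx ▸ hη) hfeas)).trans ?_
  gcongr
  exact div_nonneg (by nlinarith [Real.one_lt_sqrt_two]) (one_sub_sqrt_two_add_one_mul_pos hδ).le

theorem basis_pursuit_error_bound {m n k : ℕ}
    (hk : 1 ≤ k) (hn : 2 * k ≤ n)
    (A : Matrix (Fin m) (Fin n) ℝ) (δ : ℝ) (hδ0 : 0 < δ)
    (hδ : δ < Real.sqrt 2 - 1)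
    (hRIP : RIP A (2 * k) δ)
    (x : Fin n → ℝ) (η : Fin m → ℝ) (ε : ℝ) (hη : l2norm η ≤ ε)
    (y : Fin m → ℝ) (hy : y = A.mulVec x + η)
    (xhat : Fin n → ℝ)
    (hfeas : l2norm (y - A.mulVec xhat) ≤ ε)
    (hopt : ∀ z : Fin n → ℝ, l2norm (y - A.mulVec z) ≤ ε → l1norm xhat ≤ l1norm z) :
    l2norm (xhat - x) ≤
      (2 * (1 + (Real.sqrt 2 - 1) * δ) / (1 - (Real.sqrt 2 + 1) * δ)) *
        (sigmaL1 k x / Real.sqrt k) +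
      (4 * Real.sqrt (1 + δ) / (1 - (Real.sqrt 2 + 1) * δ)) * ε :=
  basis_pursuit_error_bound_general hk A δ hδ0 hδ hRIP x η ε hη y hy xhat hfeas hopt
end

section
/- Suppose A ∈ ℝ^{m×n} satisfies the restricted isometry property of order k with constant δ_k < 1, let S ⊆ {1,…,n} with |S| ≤ k, let x ∈ ℝⁿ with supp(x) ⊆ S, and let y = Ax + η with ‖η‖₂ ≤ ε. Then the submatrix A_S (columns of A indexed by S) has full column rank, the oracle estimator x̂ defined on S by x̂_S = (A_Sᵀ A_S)⁻¹ A_Sᵀ y and zero outside S satisfies x̂ − x = the zero-extension of (A_Sᵀ A_S)⁻¹ A_Sᵀ η, and ‖x̂ − x‖₂ ≤ ε / √(1 − δ_k). -/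
/-!
On the support `S` the problem is the full-column-rank least-squares problem for `B = A_S`.
The RIP lower bound `(1 - δ) ‖v‖² ≤ ‖B v‖²` makes `B` injective, so the Gram matrix `BᵀB` is
positive definite and the oracle estimator reproduces `x` exactly up to the term
`w = (BᵀB)⁻¹ Bᵀ η`. Since `B w` is the orthogonal projection of `η` onto the range of `B`,
`‖B w‖ ≤ ‖η‖ ≤ ε`, and the RIP lower bound once more gives `(1 - δ) ‖w‖² ≤ ε²`.
-/

open Finset Matrix

/-- The submatrix of `A` consisting of all rows and the columns indexed by `S`. -/
def colSubmatrix {m n : ℕ} (A : Matrix (Fin m) (Fin n) ℝ) (S : Finset (Fin n)) :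
    Matrix (Fin m) {j // j ∈ S} ℝ :=
  A.submatrix id (fun j => (j : Fin n))

/-- Extension of a vector indexed by `S` to a vector on `Fin n`, by zero outside `S`. -/
def zeroExt {n : ℕ} (S : Finset (Fin n)) (v : {j // j ∈ S} → ℝ) : Fin n → ℝ :=
  fun j => if h : j ∈ S then v ⟨j, h⟩ else 0

section ZeroExt

variable {n : ℕ} (S : Finset (Fin n))

lemma sum_comp_zeroExt {M : Type*} [AddCommMonoid M] (f : Fin n → ℝ → M)
    (hf : ∀ j, f j 0 = 0) (v : {j // j ∈ S} → ℝ) :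
    ∑ j, f j (zeroExt S v j) = ∑ j : {j // j ∈ S}, f j (v j) := by
  rw [← Finset.sum_subset (Finset.subset_univ S) (fun j _ hj => by simp [zeroExt, hj, hf]),
    ← Finset.sum_attach S]
  exact Finset.sum_congr rfl fun j _ => by simp [zeroExt, j.2]

lemma sum_sq_zeroExt (v : {j // j ∈ S} → ℝ) : ∑ j, zeroExt S v j ^ 2 = ∑ j, v j ^ 2 :=
  sum_comp_zeroExt S (fun _ t => t ^ 2) (fun _ => zero_pow two_ne_zero) v

lemma l2norm_zeroExt (v : {j // j ∈ S} → ℝ) :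
    l2norm (zeroExt S v) = Real.sqrt (∑ j, v j ^ 2) := by
  rw [l2norm, sum_sq_zeroExt]

lemma mulVec_zeroExt {m : ℕ} (A : Matrix (Fin m) (Fin n) ℝ) (v : {j // j ∈ S} → ℝ) :
    A *ᵥ zeroExt S v = colSubmatrix A S *ᵥ v := by
  funext i
  exact sum_comp_zeroExt S (fun j t => A i j * t) (fun _ => mul_zero _) v

lemma kSparse_zeroExt {k : ℕ} (hS : S.card ≤ k) (v : {j // j ∈ S} → ℝ) :
    KSparse k (zeroExt S v) := by
  refine le_trans ?_ ((Set.ncard_coe_finset S).trans_le hS)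
  refine Set.ncard_le_ncard (fun j hj => ?_) (Set.toFinite _)
  by_contra h
  exact hj (dif_neg h)

lemma zeroExt_add (a b : {j // j ∈ S} → ℝ) :
    zeroExt S (a + b) = zeroExt S a + zeroExt S b := by
  funext j
  by_cases h : j ∈ S <;> simp [zeroExt, h]

lemma zeroExt_restrict {x : Fin n → ℝ} (hx : ∀ j, x j ≠ 0 → j ∈ S) :
    zeroExt S (fun j => x j) = x := by
  funext j
  by_cases h : j ∈ S
  · simp [zeroExt, h]
  · simp only [zeroExt, h, dite_false]
    exact (not_imp_comm.1 (hx j) h).symm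

end ZeroExt

lemma RIP.lower_bound_colSubmatrix {m n k : ℕ} {A : Matrix (Fin m) (Fin n) ℝ} {δ : ℝ}
    (hA : RIP A k δ) {S : Finset (Fin n)} (hS : S.card ≤ k) (v : {j // j ∈ S} → ℝ) :
    (1 - δ) * ∑ j, v j ^ 2 ≤ ∑ i, (colSubmatrix A S *ᵥ v) i ^ 2 := by
  have h := (hA (zeroExt S v) (kSparse_zeroExt S hS v)).1
  rwa [mulVec_zeroExt, sum_sq_zeroExt] at h

section Gram

variable {ι κ : Type*} [Fintype ι] [Fintype κ]

lemma sum_sq_eq_dotProduct_self (v : ι → ℝ) : ∑ i, v i ^ 2 = v ⬝ᵥ v := by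
  simp only [dotProduct, sq]

lemma mulVec_injective_of_lower_bound (B : Matrix ι κ ℝ) {c : ℝ} (hc : 0 < c)
    (h : ∀ v, c * ∑ j, v j ^ 2 ≤ ∑ i, (B *ᵥ v) i ^ 2) : Function.Injective B.mulVec := by
  intro v w hvw
  have hvw' := h (v - w)
  rw [mulVec_sub, hvw, sub_self, sum_sq_eq_dotProduct_self, sum_sq_eq_dotProduct_self,
    dotProduct_zero] at hvw'
  have hself : (v - w) ⬝ᵥ (v - w) = 0 :=
    le_antisymm (nonpos_of_mul_nonpos_right hvw' hc)
      (by simpa using dotProduct_star_self_nonneg (v - w))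
  exact sub_eq_zero.1 (dotProduct_self_eq_zero.1 hself)

variable [DecidableEq κ]

lemma isUnit_det_transpose_mul_self {B : Matrix ι κ ℝ} (hB : Function.Injective B.mulVec) :
    IsUnit (Bᵀ * B).det := by
  have hpos := PosDef.conjTranspose_mul_self B hB
  rw [conjTranspose_eq_transpose_of_trivial] at hpos
  exact hpos.det_pos.ne'.isUnit

lemma gram_inv_mulVec_transpose_mulVec_add {R : Type*} [CommRing R] {B : Matrix ι κ R}
    (hB : IsUnit (Bᵀ * B).det) (v : κ → R) (η : ι → R) :
    (Bᵀ * B)⁻¹ *ᵥ (Bᵀ *ᵥ (B *ᵥ v + η)) = v + (Bᵀ * B)⁻¹ *ᵥ (Bᵀ *ᵥ η) := by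
  rw [mulVec_add, mulVec_add, mulVec_mulVec, mulVec_mulVec, Matrix.mul_assoc,
    nonsing_inv_mul _ hB, one_mulVec]

lemma sum_sq_mulVec_gram_inv_le {B : Matrix ι κ ℝ} (hB : IsUnit (Bᵀ * B).det) (η : ι → ℝ) :
    ∑ i, (B *ᵥ ((Bᵀ * B)⁻¹ *ᵥ (Bᵀ *ᵥ η))) i ^ 2 ≤ ∑ i, η i ^ 2 := by
  set w := (Bᵀ * B)⁻¹ *ᵥ (Bᵀ *ᵥ η)
  set p := B *ᵥ w
  have hnormal : Bᵀ *ᵥ p = Bᵀ *ᵥ η := by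
    rw [mulVec_mulVec, mulVec_mulVec, mul_nonsing_inv _ hB, one_mulVec]
  have hp : p ⬝ᵥ p = p ⬝ᵥ η := by
    calc p ⬝ᵥ p = (Bᵀ *ᵥ p) ⬝ᵥ w := by rw [mulVec_transpose, ← dotProduct_mulVec]
      _ = (Bᵀ *ᵥ η) ⬝ᵥ w := by rw [hnormal]
      _ = p ⬝ᵥ η := by rw [mulVec_transpose, ← dotProduct_mulVec, dotProduct_comm]
  have hpythagoras : η ⬝ᵥ η = p ⬝ᵥ p + (η - p) ⬝ᵥ (η - p) := by
    simp only [sub_dotProduct, dotProduct_sub, dotProduct_comm η p, hp]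
    ring
  rw [sum_sq_eq_dotProduct_self, sum_sq_eq_dotProduct_self, hpythagoras, le_add_iff_nonneg_right]
  simpa using dotProduct_star_self_nonneg (η - p)

end Gram

lemma sqrt_le_div_sqrt_of_mul_le {s c ε : ℝ} (hc : 0 < c) (hε : 0 ≤ ε) (h : c * s ≤ ε ^ 2) :
    Real.sqrt s ≤ ε / Real.sqrt c := by
  rw [le_div_iff₀ (Real.sqrt_pos.2 hc), ← Real.sqrt_mul' _ hc.le, mul_comm]
  exact (Real.sqrt_le_left hε).2 h

theorem oracle_estimator_error_bound {m n k : ℕ}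
    (A : Matrix (Fin m) (Fin n) ℝ) (δ : ℝ) (hδ : δ ∈ Set.Ioo (0 : ℝ) 1)
    (hRIP : RIP A k δ)
    (S : Finset (Fin n)) (hS : S.card ≤ k)
    (x : Fin n → ℝ) (hsupp : ∀ j, x j ≠ 0 → j ∈ S)
    (η : Fin m → ℝ) (ε : ℝ) (hη : l2norm η ≤ ε)
    (y : Fin m → ℝ) (hy : y = A.mulVec x + η)
    (xhat : Fin n → ℝ)
    (hxhat : xhat = zeroExt S
      ((((colSubmatrix A S)ᵀ * colSubmatrix A S)⁻¹).mulVec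
        ((colSubmatrix A S)ᵀ.mulVec y))) :
    LinearIndependent ℝ (fun j : {j // j ∈ S} => fun i => A i (j : Fin n)) ∧
    xhat - x = zeroExt S
      ((((colSubmatrix A S)ᵀ * colSubmatrix A S)⁻¹).mulVec
        ((colSubmatrix A S)ᵀ.mulVec η)) ∧
    l2norm (xhat - x) ≤ ε / Real.sqrt (1 - δ) := by
  set B := colSubmatrix A S
  have hlow := hRIP.lower_bound_colSubmatrix hS
  have hinj : Function.Injective B.mulVec :=
    mulVec_injective_of_lower_bound B (sub_pos.2 hδ.2) hlow
  have hG := isUnit_det_transpose_mul_self hinj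
  have herr : xhat - x = zeroExt S ((Bᵀ * B)⁻¹ *ᵥ (Bᵀ *ᵥ η)) := by
    rw [hxhat, hy, ← zeroExt_restrict S hsupp, mulVec_zeroExt,
      gram_inv_mulVec_transpose_mulVec_add hG, zeroExt_add, add_sub_cancel_left]
  obtain ⟨hε, hηε⟩ := Real.sqrt_le_iff.1 hη
  refine ⟨mulVec_injective_iff.1 hinj, herr, ?_⟩
  rw [herr, l2norm_zeroExt]
  exact sqrt_le_div_sqrt_of_mul_le (sub_pos.2 hδ.2) hε
    ((hlow _).trans ((sum_sq_mulVec_gram_inv_le hG η).trans hηε))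
end
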